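/- arXiv:0810.3603 — 7 statements merged into one kernel-verified Lean document; each statement's English description precedes it below -/
import Mathlib

section
/- Let p be a prime and G = ⟨σ⟩ a cyclic group of order p^m. Define the class function δ on G by δ(σ^a) = -p^(i+1)/(p-1) for a ≢ 0 mod p^m where i = ord_p(a), and δ(1) = m·p^m. Then for an irreducible character χ of G of order p^n with n > 0, the inner product ⟨χ, δ⟩ equals (np - n + 1)/(p-1), and ⟨1_G, δ⟩ = 0. -/
open Finset

/-- The class function `δ_G^mult` on the cyclic group `ZMod (p^m)` (written
multiplicatively): `δ(σ^a) = -p^(i+1)/(p-1)` for `a ≢ 0 mod p^m`, where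
`i = ord_p a`, and `δ(1) = m·p^m`. -/
noncomputable def deltaMult (p m : ℕ) : Multiplicative (ZMod (p ^ m)) → ℂ :=
  fun a =>
    if (Multiplicative.toAdd a) = 0 then (m : ℂ) * (p : ℂ) ^ m
    else -((p : ℂ) ^ (padicValNat p (Multiplicative.toAdd a).val + 1)) / ((p : ℂ) - 1)

/-- Inner product of class functions on a finite group. -/
noncomputable def innerCF {G : Type*} [Group G] [Fintype G] (χ₁ χ₂ : G → ℂ) : ℂ :=
  (Fintype.card G : ℂ)⁻¹ * ∑ g : G, (starRingEnd ℂ) (χ₁ g) * χ₂ g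

/-! Write `w_j(a) = p^j·[p^j ∣ a]`. Since `∑_{j ≤ ord_p a} p^j = (p^(ord_p a + 1) - 1)/(p - 1)`,
`δ(σ^a) = (m + 1/(p-1)) w_m(a) - ∑_{j<m} w_j(a) - 1/(p-1)` for every `0 ≤ a < p^m`.
With `ξ = conj χ(σ)` of order `p^n`, the sum `∑_a ξ^a w_j(a) = p^j ∑_{c < p^(m-j)} (ξ^(p^j))^c`
is `p^m` if `n ≤ j` and `0` otherwise, so `⟨χ, δ⟩ = (m + 1/(p-1)) - (m - n) - [n = 0]/(p-1)`. -/
theorem geom_sum_eq_ite_of_pow_eq_one {K : Type*} [Field K] [DecidableEq K] {ξ : K} {N : ℕ}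
    (h : ξ ^ N = 1) :
    ∑ c ∈ range N, ξ ^ c = if ξ = 1 then (N : K) else 0 := by
  split_ifs with h1
  · simp [h1]
  · rw [geom_sum_eq h1, h, sub_self, zero_div]

theorem Finset.sum_range_mul_ite_dvd {M : Type*} [AddCommMonoid M] {k : ℕ} (hk : 0 < k)
    (N : ℕ) (f : ℕ → M) :
    ∑ a ∈ range (k * N), (if k ∣ a then f a else 0) = ∑ c ∈ range N, f (k * c) := by
  have himage : (range N).image (k * ·) = {a ∈ range (k * N) | k ∣ a} := by
    ext a
    simp only [mem_image, mem_range, mem_filter]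
    constructor
    · rintro ⟨c, hc, rfl⟩
      exact ⟨Nat.mul_lt_mul_of_pos_left hc hk, dvd_mul_right k c⟩
    · rintro ⟨ha, c, rfl⟩
      exact ⟨c, Nat.lt_of_mul_lt_mul_left ha, rfl⟩
  rw [← sum_filter, ← himage, sum_image fun _ _ _ _ h => Nat.eq_of_mul_eq_mul_left hk h]

theorem sum_multiplicative_zmod_eq_sum_range {M : Type*} [AddCommMonoid M] (N : ℕ) [NeZero N]
    (f : ℕ → M) :
    ∑ g : Multiplicative (ZMod N), f (Multiplicative.toAdd g).val = ∑ a ∈ range N, f a := by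
  obtain ⟨k, rfl⟩ := Nat.exists_eq_succ_of_ne_zero (NeZero.ne N)
  rw [Fintype.sum_equiv Multiplicative.toAdd _ (fun x : ZMod (k + 1) => f x.val) fun _ => rfl]
  exact Fin.sum_univ_eq_sum_range f (k + 1)

theorem MonoidHom.map_ofAdd_zmod {M : Type*} [Monoid M] {N : ℕ} [NeZero N]
    (χ : Multiplicative (ZMod N) →* M) (x : ZMod N) :
    χ (Multiplicative.ofAdd x) = χ (Multiplicative.ofAdd 1) ^ x.val := by
  rw [← map_pow, ← ofAdd_nsmul, nsmul_one, ZMod.natCast_zmod_val]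

theorem MonoidHom.orderOf_eq_orderOf_map_ofAdd_one {M : Type*} [CommMonoid M] {N : ℕ} [NeZero N]
    (χ : Multiplicative (ZMod N) →* M) :
    orderOf χ = orderOf (χ (Multiplicative.ofAdd 1)) := by
  refine (orderOf_injective (MonoidHom.eval (Multiplicative.ofAdd 1)) (fun χ ψ h => ?_) χ).symm
  refine MonoidHom.ext fun g => ?_
  rw [← ofAdd_toAdd g, χ.map_ofAdd_zmod, ψ.map_ofAdd_zmod]
  exact congrArg (· ^ _) h

theorem sum_range_pow_mul_ite_pow_dvd {p n m j : ℕ} (hp : 1 < p) {ξ : ℂ}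
    (hξ : orderOf ξ = p ^ n) (hn : n ≤ m) (hj : j ≤ m) :
    ∑ a ∈ range (p ^ m), ξ ^ a * (if p ^ j ∣ a then (p : ℂ) ^ j else 0) =
      if n ≤ j then (p : ℂ) ^ m else 0 := by
  obtain ⟨k, rfl⟩ := Nat.exists_eq_add_of_le hj
  have hξj : ξ ^ p ^ j = 1 ↔ n ≤ j := by
    rw [← orderOf_dvd_iff_pow_eq_one, hξ, Nat.pow_dvd_pow_iff_le_right hp]
  have hξk : (ξ ^ p ^ j) ^ p ^ k = 1 := by
    rw [← pow_mul, ← pow_add, ← orderOf_dvd_iff_pow_eq_one, hξ]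
    exact Nat.pow_dvd_pow p hn
  simp only [mul_ite, mul_zero]
  rw [pow_add, sum_range_mul_ite_dvd (pow_pos (by omega) j), ← sum_mul]
  simp only [pow_mul]
  rw [geom_sum_eq_ite_of_pow_eq_one hξk]
  simp only [hξj]
  split_ifs <;> push_cast <;> ring

theorem sum_range_ite_pow_dvd {p a m : ℕ} (hp : p ≠ 1) (ha : a ≠ 0) (ham : a < p ^ m) :
    ∑ j ∈ range m, (if p ^ j ∣ a then (p : ℂ) ^ j else 0) =
      ∑ j ∈ range (padicValNat p a + 1), (p : ℂ) ^ j := by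
  have hdvd (j : ℕ) : p ^ j ∣ a ↔ j ≤ padicValNat p a := padicValNat_dvd_iff_le_of_ne_one hp ha
  have hv : padicValNat p a < m := by
    by_contra! h
    exact ha (Nat.eq_zero_of_dvd_of_lt ((hdvd m).2 h) ham)
  rw [← sum_filter]
  congr 1
  ext j
  simp only [mem_filter, mem_range, hdvd]
  omega

noncomputable def deltaNat (p m a : ℕ) : ℂ :=
  ((m : ℂ) + ((p : ℂ) - 1)⁻¹) * (if p ^ m ∣ a then (p : ℂ) ^ m else 0)
    - ∑ j ∈ range m, (if p ^ j ∣ a then (p : ℂ) ^ j else 0) - ((p : ℂ) - 1)⁻¹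

theorem deltaMult_eq_deltaNat {p m : ℕ} (hp : 1 < p) [NeZero (p ^ m)]
    (g : Multiplicative (ZMod (p ^ m))) :
    deltaMult p m g = deltaNat p m (Multiplicative.toAdd g).val := by
  have hp1 : (p : ℂ) - 1 ≠ 0 := sub_ne_zero.2 (by exact_mod_cast hp.ne')
  set a := (Multiplicative.toAdd g).val with ha_def
  have ham : a < p ^ m := ZMod.val_lt _
  by_cases hg : Multiplicative.toAdd g = 0
  · have ha : a = 0 := by rw [ha_def, hg, ZMod.val_zero]
    simp only [deltaMult, deltaNat, hg, if_true, ha, dvd_zero]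
    rw [geom_sum_eq (by exact_mod_cast hp.ne') m]
    field_simp
    ring
  · have ha : a ≠ 0 := by rwa [ha_def, ne_eq, ZMod.val_eq_zero]
    have hnd : ¬ p ^ m ∣ a := fun h => ha (Nat.eq_zero_of_dvd_of_lt h ham)
    rw [deltaMult, deltaNat, if_neg hg, if_neg hnd, sum_range_ite_pow_dvd hp.ne' ha ham,
      geom_sum_eq (by exact_mod_cast hp.ne')]
    field_simp
    ring

theorem sum_range_pow_mul_deltaNat {p m n : ℕ} (hp : 1 < p) {ξ : ℂ}
    (hξ : orderOf ξ = p ^ n) (hn : n ≤ m) :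
    ∑ a ∈ range (p ^ m), ξ ^ a * deltaNat p m a =
      (p : ℂ) ^ m * (n + if n = 0 then 0 else ((p : ℂ) - 1)⁻¹) := by
  have hw (j : ℕ) (hj : j ≤ m) := sum_range_pow_mul_ite_pow_dvd hp hξ hn hj
  have h0 := hw 0 (Nat.zero_le m)
  simp only [pow_zero, one_dvd, if_true, mul_one, nonpos_iff_eq_zero] at h0
  have hcount : ∑ j ∈ range m, (if n ≤ j then (p : ℂ) ^ m else 0) = (m - n) * (p : ℂ) ^ m := by
    rw [sum_ite, sum_const_zero, add_zero, sum_const, nsmul_eq_mul, range_eq_Ico, Ico_filter_le,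
      Nat.card_Ico, max_eq_right (Nat.zero_le n), Nat.cast_sub hn]
  simp only [deltaNat, mul_sub, mul_sum, sum_sub_distrib, mul_left_comm _ ((m : ℂ) + _)]
  rw [← mul_sum, ← sum_mul, sum_comm, sum_congr rfl fun j hj => hw j (mem_range.1 hj).le,
    hw m le_rfl, if_pos hn, h0, hcount]
  split_ifs <;> ring

theorem innerCF_deltaMult {p m n : ℕ} (hp : 1 < p) [NeZero (p ^ m)]
    (χ : Multiplicative (ZMod (p ^ m)) →* ℂ) (hχ : orderOf χ = p ^ n) :
    innerCF χ (deltaMult p m) = n + if n = 0 then 0 else ((p : ℂ) - 1)⁻¹ := by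
  set ξ := starRingEnd ℂ (χ (Multiplicative.ofAdd 1))
  have hconj (g : Multiplicative (ZMod (p ^ m))) :
      starRingEnd ℂ (χ g) = ξ ^ (Multiplicative.toAdd g).val := by
    rw [← ofAdd_toAdd g, χ.map_ofAdd_zmod, map_pow, toAdd_ofAdd]
  have hξ : orderOf ξ = p ^ n := by
    rw [← hχ, χ.orderOf_eq_orderOf_map_ofAdd_one]
    exact orderOf_injective (starRingEnd ℂ).toMonoidHom (RingHom.injective _) _
  have hn : n ≤ m := by
    have : p ^ n ∣ p ^ m := by
      rw [← hχ, χ.orderOf_eq_orderOf_map_ofAdd_one]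
      simpa only [orderOf_ofAdd_eq_addOrderOf, ZMod.addOrderOf_one] using
        orderOf_map_dvd χ (Multiplicative.ofAdd 1)
    exact (Nat.pow_dvd_pow_iff_le_right hp).1 this
  have hpm : (p : ℂ) ^ m ≠ 0 := pow_ne_zero m (by exact_mod_cast (zero_lt_one.trans hp).ne')
  simp only [innerCF, Fintype.card_multiplicative, ZMod.card, hconj, deltaMult_eq_deltaNat hp]
  rw [sum_multiplicative_zmod_eq_sum_range (p ^ m) fun a => ξ ^ a * deltaNat p m a,
    sum_range_pow_mul_deltaNat hp hξ hn, Nat.cast_pow, inv_mul_cancel_left₀ hpm]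

/-- For `G` cyclic of order `p^m` and `χ` an irreducible character of `G`
(i.e. a homomorphism `G →* ℂ`) of order `p^n` with `n > 0`, one has
`⟨χ, δ_G^mult⟩ = (np - n + 1)/(p - 1)`; moreover `⟨1_G, δ_G^mult⟩ = 0`. -/
theorem stmt0 (p m : ℕ) (hp : p.Prime) [NeZero (p ^ m)]
    (χ : Multiplicative (ZMod (p ^ m)) →* ℂ) (n : ℕ) (hn : 0 < n)
    (hχ : orderOf χ = p ^ n) :
    innerCF (⇑χ) (deltaMult p m) = ((n * p : ℂ) - n + 1) / ((p : ℂ) - 1) ∧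
    innerCF (fun _ : Multiplicative (ZMod (p ^ m)) => (1 : ℂ)) (deltaMult p m) = 0 := by
  have hp1 : (p : ℂ) - 1 ≠ 0 := sub_ne_zero.2 (by exact_mod_cast hp.one_lt.ne')
  constructor
  · rw [innerCF_deltaMult hp.one_lt χ hχ, if_neg hn.ne']
    field_simp
  · have h := innerCF_deltaMult hp.one_lt (1 : Multiplicative (ZMod (p ^ m)) →* ℂ) (n := 0)
      (by rw [orderOf_one, pow_zero])
    rwa [if_pos rfl, Nat.cast_zero, zero_add] at h
end

section
/- With δ the class function on the cyclic group G of order p^m defined by δ(σ^a) = -p^(i+1)/(p-1) for a ≢ 0 (where i = ord_p(a)) and δ(1) = m·p^m, one has ⟨ψ, δ⟩ ≥ 0 for every character ψ of a complex representation of G; i.e., δ is a nonnegative rational combination of irreducible characters with nonnegative coefficients. -/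
/-!
Write `H_j = p^j · ZMod (p^m)`, the subgroup of index `p^j` of `G = ZMod (p^m)`. Since `δ(σ^a)` only depends on the
largest `j ≤ m` with `p^j ∣ a`, telescoping writes `δ = ∑_{j ≤ m} c_j p^j 𝟙_{H_j}` with
`c_0 = -p/(p-1)`, `c_j = -1` for `0 < j < m` and `c_m = m + 1/(p-1)`. As
`⟨ψ, 𝟙_H⟩ = dim V^H / [G : H]`, this gives `⟨ψ, δ⟩ = ∑_j c_j dim V^{H_j}`, a real number.
Finally `∑_j c_j = 0`, `c_j ≤ 0` for `j < m` and `dim V^{H_j} ≤ dim V = dim V^{H_m}`, so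
`⟨ψ, δ⟩ = ∑_{j < m} c_j (dim V^{H_j} - dim V) ≥ 0`.
-/

open Finset

open Module Representation

lemma sum_mul_le_sum_mul_of_le_of_nonpos {ι : Type*} {s : Finset ι} {i₀ : ι} {w d : ι → ℝ}
    (hd : ∀ i ∈ s, d i ≤ d i₀) (hw : ∀ i ∈ s, i ≠ i₀ → w i ≤ 0) :
    (∑ i ∈ s, w i) * d i₀ ≤ ∑ i ∈ s, w i * d i := by
  rw [Finset.sum_mul]
  refine Finset.sum_le_sum fun i hi => ?_
  obtain rfl | hi₀ := eq_or_ne i i₀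
  · exact le_rfl
  · exact mul_le_mul_of_nonpos_left (hd i hi) (hw i hi hi₀)

section InnerProduct

variable {G : Type} [Group G]

noncomputable def finrankInvariants (V : FDRep ℂ G) (H : Subgroup G) : ℕ :=
  finrank ℂ (invariants (V.ρ.comp H.subtype))

lemma finrankInvariants_le (V : FDRep ℂ G) (H : Subgroup G) :
    finrankInvariants V H ≤ finrank ℂ V :=
  Submodule.finrank_le _

lemma finrankInvariants_bot (V : FDRep ℂ G) : finrankInvariants V ⊥ = finrank ℂ V := by
  have htop : invariants (V.ρ.comp (⊥ : Subgroup G).subtype) = ⊤ :=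
    eq_top_iff.2 fun v _ ⟨g, hg⟩ => by simp [Subgroup.mem_bot.1 hg]
  rw [finrankInvariants, htop, finrank_top]

lemma sum_character_subgroup (V : FDRep ℂ G) (H : Subgroup G) [Fintype H] :
    ∑ h : H, V.character h = Nat.card H * finrankInvariants V H := by
  have : Invertible (Nat.card H : ℂ) := invertibleOfNonzero (by simp)
  have h := FDRep.average_char_eq_finrank_invariants (FDRep.of (V.ρ.comp H.subtype))
  rw [FDRep.of_ρ'] at h
  rw [finrankInvariants, ← h, mul_inv_cancel_left₀ (by simp)]
  rfl

variable [Fintype G]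

lemma innerCF_sum_mul {ι : Type*} (χ : G → ℂ) (s : Finset ι) (c : ι → ℂ) (f : ι → G → ℂ) :
    innerCF χ (fun g => ∑ i ∈ s, c i * f i g) = ∑ i ∈ s, c i * innerCF χ (f i) := by
  simp only [innerCF, Finset.mul_sum]
  rw [Finset.sum_comm]
  exact Finset.sum_congr rfl fun i _ => Finset.sum_congr rfl fun g _ => by ring

lemma innerCF_character_indicator (V : FDRep ℂ G) (H : Subgroup G) [DecidablePred (· ∈ H)] :
    innerCF V.character (fun g => if g ∈ H then 1 else 0) = finrankInvariants V H / H.index := by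
  have hsum : ∑ g : G, starRingEnd ℂ (V.character g) * (if g ∈ H then 1 else 0)
      = starRingEnd ℂ (∑ h : H, V.character h) := by
    simp only [mul_ite, mul_one, mul_zero, ← Finset.sum_filter, map_sum]
    exact Finset.sum_subtype _ (by simp) _
  rw [innerCF, hsum, sum_character_subgroup, ← Nat.card_eq_fintype_card,
    ← H.card_mul_index]
  simp only [map_mul, map_natCast, Nat.cast_mul]
  have : (Nat.card H : ℂ) ≠ 0 := by simp
  field_simp

end InnerProduct

section MultiplesSubgroup

noncomputable def multiplesSubgroup (n d : ℕ) : Subgroup (Multiplicative (ZMod n)) :=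
  Subgroup.zpowers (Multiplicative.ofAdd (d : ZMod n))

lemma multiplesSubgroup_self (n : ℕ) : multiplesSubgroup n n = ⊥ := by
  simp [multiplesSubgroup]

variable {n d : ℕ} [NeZero n]

lemma mem_multiplesSubgroup (hd : d ∣ n) (g : Multiplicative (ZMod n)) :
    g ∈ multiplesSubgroup n d ↔ d ∣ (Multiplicative.toAdd g).val := by
  constructor
  · rintro ⟨k, rfl⟩
    rw [← ZMod.natCast_eq_zero_iff, ZMod.natCast_val]
    change ZMod.castHom hd (ZMod d) (Multiplicative.toAdd (Multiplicative.ofAdd _ ^ k)) = 0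
    rw [toAdd_zpow, toAdd_ofAdd, map_zsmul, map_natCast, ZMod.natCast_self, smul_zero]
  · rintro ⟨t, ht⟩
    refine ⟨t, Multiplicative.toAdd.injective ?_⟩
    rw [← ZMod.natCast_zmod_val (Multiplicative.toAdd g), ht]
    simp [mul_comm]

lemma index_multiplesSubgroup (hd : d ∣ n) : (multiplesSubgroup n d).index = d := by
  have hcard := (multiplesSubgroup n d).card_mul_index
  rw [multiplesSubgroup, Nat.card_zpowers, orderOf_ofAdd_eq_addOrderOf,
    ZMod.addOrderOf_coe _ (NeZero.ne n), Nat.gcd_eq_right hd, Nat.card_eq_fintype_card,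
    Fintype.card_multiplicative, ZMod.card] at hcard
  have hpos : 0 < n / d :=
    Nat.div_pos (Nat.le_of_dvd (NeZero.pos n) hd) (Nat.pos_of_dvd_of_pos hd (NeZero.pos n))
  exact Nat.eq_of_mul_eq_mul_left hpos (hcard.trans (Nat.div_mul_cancel hd).symm)

lemma innerCF_character_dvd_indicator (V : FDRep ℂ (Multiplicative (ZMod n))) (hd : d ∣ n) :
    innerCF V.character (fun g => if d ∣ (Multiplicative.toAdd g).val then 1 else 0)
      = finrankInvariants V (multiplesSubgroup n d) / d := by
  classical
  have h := innerCF_character_indicator V (multiplesSubgroup n d)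
  rw [index_multiplesSubgroup hd] at h
  rw [← h]
  simp only [mem_multiplesSubgroup hd]

end MultiplesSubgroup

section Delta

-- The `c_j` of the header, for `m ≠ 0`.
noncomputable def deltaCoeff (p m j : ℕ) : ℝ :=
  if j = 0 then -p / (p - 1) else if j < m then -1 else m + 1 / (p - 1)

variable {p m : ℕ}

lemma deltaCoeff_nonpos (hp : 1 < p) {j : ℕ} (hj : j < m) : deltaCoeff p m j ≤ 0 := by
  have : (0 : ℝ) < p - 1 := by rw [sub_pos]; exact_mod_cast hp
  unfold deltaCoeff
  split_ifs
  · exact div_nonpos_of_nonpos_of_nonneg (by simp) this.le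
  · norm_num

lemma sum_deltaCoeff (hp : (p : ℝ) ≠ 1) (hm : m ≠ 0) :
    ∑ j ∈ range (m + 1), deltaCoeff p m j = 0 := by
  obtain ⟨k, rfl⟩ := Nat.exists_eq_succ_of_ne_zero hm
  have hmid : ∑ j ∈ range k, deltaCoeff p (k + 1) (j + 1) = -k := by
    rw [Finset.sum_congr rfl fun j hj => by
      rw [deltaCoeff, if_neg j.succ_ne_zero, if_pos (by simpa using hj)]]
    simp
  rw [Finset.sum_range_succ, Finset.sum_range_succ', hmid, deltaCoeff, deltaCoeff,
    if_pos rfl, if_neg k.succ_ne_zero, if_neg (lt_irrefl _)]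
  have : (p : ℝ) - 1 ≠ 0 := sub_ne_zero.2 hp
  field_simp
  push_cast
  ring

lemma sum_deltaCoeff_mul_pow (hp : (p : ℝ) ≠ 1) {k : ℕ} (hk : k < m) :
    ∑ j ∈ range (k + 1), deltaCoeff p m j * p ^ j = -p ^ (k + 1) / (p - 1) := by
  have : (p : ℝ) - 1 ≠ 0 := sub_ne_zero.2 hp
  induction k with
  | zero => simp [deltaCoeff]
  | succ k ih =>
    rw [Finset.sum_range_succ, ih (by omega), deltaCoeff, if_neg k.succ_ne_zero, if_pos hk]
    field_simp
    ring

lemma deltaMult_eq_sum (hp : p.Prime) (hm : m ≠ 0) [NeZero (p ^ m)]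
    (g : Multiplicative (ZMod (p ^ m))) :
    deltaMult p m g = ((∑ j ∈ range (m + 1),
      if p ^ j ∣ (Multiplicative.toAdd g).val then deltaCoeff p m j * p ^ j else 0 : ℝ) : ℂ) := by
  have hp1 : (p : ℝ) ≠ 1 := by exact_mod_cast hp.ne_one
  by_cases ha : Multiplicative.toAdd g = 0
  · obtain ⟨k, rfl⟩ := Nat.exists_eq_succ_of_ne_zero hm
    have : (p : ℂ) - 1 ≠ 0 := sub_ne_zero.2 (by exact_mod_cast hp.ne_one)
    rw [deltaMult, if_pos ha, ha]
    simp only [ZMod.val_zero, dvd_zero, if_true]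
    rw [Finset.sum_range_succ, sum_deltaCoeff_mul_pow hp1 k.lt_succ_self, deltaCoeff,
      if_neg k.succ_ne_zero, if_neg (lt_irrefl _)]
    push_cast
    field_simp
    ring
  · set a := Multiplicative.toAdd g
    have hval : a.val ≠ 0 := (ZMod.val_ne_zero a).2 ha
    have : Fact p.Prime := ⟨hp⟩
    set i := padicValNat p a.val
    have hi : i < m := by
      by_contra! h
      exact (Nat.le_of_dvd (Nat.pos_of_ne_zero hval)
        ((padicValNat_dvd_iff_le hval).2 h)).not_gt (ZMod.val_lt a)
    have hfilter : (range (m + 1)).filter (fun j => p ^ j ∣ a.val) = range (i + 1) := by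
      ext j
      simp only [mem_filter, mem_range, padicValNat_dvd_iff_le hval]
      omega
    rw [deltaMult, if_neg ha, ← Finset.sum_filter, hfilter, sum_deltaCoeff_mul_pow hp1 hi]
    push_cast
    ring

lemma deltaMult_zero (p : ℕ) (g : Multiplicative (ZMod (p ^ 0))) : deltaMult p 0 g = 0 := by
  have : Subsingleton (ZMod (p ^ 0)) := by rw [pow_zero]; infer_instance
  rw [deltaMult, if_pos (Subsingleton.elim _ _)]
  simp

end Delta

lemma innerCF_character_deltaMult {p m : ℕ} (hp : p.Prime) (hm : m ≠ 0) [NeZero (p ^ m)]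
    (V : FDRep ℂ (Multiplicative (ZMod (p ^ m)))) :
    innerCF V.character (deltaMult p m) = ((∑ j ∈ range (m + 1),
      deltaCoeff p m j * finrankInvariants V (multiplesSubgroup (p ^ m) (p ^ j)) : ℝ) : ℂ) := by
  have hδ : deltaMult p m = fun g => ∑ j ∈ range (m + 1), ((deltaCoeff p m j * p ^ j : ℝ) : ℂ) *
      (if p ^ j ∣ (Multiplicative.toAdd g).val then 1 else 0) := by
    funext g
    simp only [deltaMult_eq_sum hp hm, Complex.ofReal_sum, mul_boole, apply_ite Complex.ofReal,
      Complex.ofReal_zero]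
  rw [hδ, innerCF_sum_mul, Complex.ofReal_sum]
  refine Finset.sum_congr rfl fun j hj => ?_
  rw [innerCF_character_dvd_indicator V (pow_dvd_pow p (Nat.lt_succ_iff.1 (mem_range.1 hj)))]
  have : (p : ℂ) ^ j ≠ 0 := pow_ne_zero _ (by exact_mod_cast hp.ne_zero)
  push_cast
  field_simp

/-- `δ_G^mult ∈ R⁺(G,ℚ)`: for every character `ψ` of a finite-dimensional complex
representation of the cyclic group `G` of order `p^m`, the inner product
`⟨ψ, δ_G^mult⟩` is a nonnegative (real, in fact rational) number. -/
theorem stmt1 (p m : ℕ) (hp : p.Prime) [NeZero (p ^ m)]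
    (V : FDRep ℂ (Multiplicative (ZMod (p ^ m)))) :
    ∃ q : ℝ, 0 ≤ q ∧ innerCF V.character (deltaMult p m) = (q : ℂ) := by
  obtain rfl | hm := eq_or_ne m 0
  · refine ⟨0, le_rfl, ?_⟩
    rw [innerCF, Finset.sum_eq_zero fun g _ => by rw [deltaMult_zero, mul_zero], mul_zero,
      Complex.ofReal_zero]
  refine ⟨_, ?_, innerCF_character_deltaMult hp hm V⟩
  have hdim : ∀ j ∈ range (m + 1), (finrankInvariants V (multiplesSubgroup (p ^ m) (p ^ j)) : ℝ) ≤
      finrankInvariants V (multiplesSubgroup (p ^ m) (p ^ m)) := fun j _ => by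
    rw [multiplesSubgroup_self, finrankInvariants_bot]
    exact_mod_cast finrankInvariants_le V _
  have hcoeff : ∀ j ∈ range (m + 1), j ≠ m → deltaCoeff p m j ≤ 0 := fun j hj hjm =>
    deltaCoeff_nonpos hp.one_lt (by rw [mem_range] at hj; omega)
  have key := sum_mul_le_sum_mul_of_le_of_nonpos hdim hcoeff
  rwa [sum_deltaCoeff (by exact_mod_cast hp.ne_one) hm, zero_mul] at key
end

section
/- Let R be a complete discrete valuation ring of mixed characteristic with fraction field K, let A = R[[z]] or R{z}, and let σ be a ring automorphism of A over R with val_Y(σ(z) - z) > 0, σ ≠ id, where val_Y is the Gauss valuation. Let a ∈ R satisfy val(a) = min{ val_Y(σ(f) - f) : f ∈ A }. Then the map ∂ : A/(π) → A/(π) sending the reduction of f to the reduction of (σ(f) - f)/a is a well-defined nonzero k-derivation of Ā = A/(π). -/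
open PowerSeries

/-- The Gauss valuation on `R[[z]]` (measured in multiples of the valuation of the
uniformizer `π`): `val_Y(Σ aᵢ zⁱ) = min_i val(aᵢ)`. -/
noncomputable def gaussVal {R : Type*} [CommRing R] (π : R) (f : PowerSeries R) : ℕ∞ :=
  ⨅ i : ℕ, emultiplicity π (PowerSeries.coeff i f)

/-- Reduction mod `π` : `R[[z]] → (R/π)[[z]]`. -/
noncomputable def redMod {R : Type*} [CommRing R] (π : R) :
    PowerSeries R →+* PowerSeries (R ⧸ Ideal.span {π}) :=
  PowerSeries.map (Ideal.Quotient.mk (Ideal.span {π}))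

/-!
Since `val_Y(σ X - X) > 0`, the automorphism `σ` reduces to the identity on `k⟦X⟧`: an
`R`-algebra map out of `R⟦X⟧` is determined by the image of `X` once that image is divisible
by `X`. As `a` realises the minimum of `val_Y(σ f - f)`, the operator `d = (σ - 1)/a` is
defined on `R⟦X⟧`; it is `R`-linear and satisfies `d (f g) = σ f · d g + d f · g`, so modulo
`π` it becomes a `k`-derivation. For an `f` attaining the minimum, `d f` has a coefficient
prime to `π`, so this derivation is nonzero.
-/

namespace PowerSeries

variable {R : Type*} [CommRing R]

theorem C_dvd_iff_forall_dvd_coeff {a : R} {f : PowerSeries R} :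
    C a ∣ f ↔ ∀ i, a ∣ coeff i f := by
  refine ⟨fun ⟨g, hg⟩ i => ⟨coeff i g, by rw [hg, coeff_C_mul]⟩, fun h => ?_⟩
  choose g hg using h
  exact ⟨mk g, by ext i; rw [coeff_C_mul, coeff_mk, ← hg]⟩

theorem ringHom_ext_of_X_dvd {S : Type*} [CommRing S] {φ ψ : R⟦X⟧ →+* S⟦X⟧}
    (hC : ∀ r, φ (C r) = ψ (C r)) (hX : φ X = ψ X) (hdvd : X ∣ φ X) : φ = ψ := by
  have hpoly : ∀ p : Polynomial R, φ p = ψ p := fun p => by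
    simpa using RingHom.congr_fun (Polynomial.ringHom_ext
      (f := φ.comp Polynomial.coeToPowerSeries.ringHom)
      (g := ψ.comp Polynomial.coeToPowerSeries.ringHom) (by simpa using hC) (by simpa using hX)) p
  ext f m
  obtain ⟨q, hq⟩ := hdvd
  -- `φ` and `ψ` agree on `trunc (m + 1) f`, and both send `f - trunc (m + 1) f`,
  -- a multiple of `X ^ (m + 1)`, to multiples of `X ^ (m + 1)`
  have hsub : X ^ (m + 1) ∣ φ f - ψ f := by
    rw [eq_X_pow_mul_shift_add_trunc (m + 1) f, map_add, map_add, hpoly, map_mul, map_mul,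
      map_pow, map_pow, ← hX, hq, mul_pow, mul_assoc, mul_assoc, add_sub_add_right_eq_sub,
      ← mul_sub]
    exact dvd_mul_right _ _
  simpa [sub_eq_zero] using X_pow_dvd_iff.mp hsub m (Nat.lt_succ_self m)

end PowerSeries

section GaussValuation

variable {R : Type*} [CommRing R] (π : R)

theorem le_gaussVal_iff {n : ℕ∞} {f : PowerSeries R} :
    n ≤ gaussVal π f ↔ ∀ i, n ≤ emultiplicity π (coeff i f) :=
  le_iInf_iff

theorem redMod_eq_zero_iff {f : PowerSeries R} : redMod π f = 0 ↔ C π ∣ f := by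
  rw [C_dvd_iff_forall_dvd_coeff, PowerSeries.ext_iff]
  simp [redMod, Ideal.Quotient.eq_zero_iff_mem, Ideal.mem_span_singleton]

theorem gaussVal_pos_iff {f : PowerSeries R} : 0 < gaussVal π f ↔ redMod π f = 0 := by
  rw [← Order.one_le_iff_pos, le_gaussVal_iff, redMod_eq_zero_iff,
    C_dvd_iff_forall_dvd_coeff]
  exact forall_congr' fun i => by rw [Order.one_le_iff_pos, dvd_iff_emultiplicity_pos]

theorem redMod_X : redMod π X = X :=
  map_X _

theorem redMod_comp_eq_of_gaussVal_pos (σ : PowerSeries R →ₐ[R] PowerSeries R)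
    (h : 0 < gaussVal π (σ X - X)) : (redMod π).comp (σ : PowerSeries R →+* PowerSeries R) =
      redMod π := by
  have hσX : redMod π (σ X) = X := by
    rw [← redMod_X π, ← sub_eq_zero, ← map_sub, ← gaussVal_pos_iff]
    exact h
  exact PowerSeries.ringHom_ext_of_X_dvd (fun r => by simp [← algebraMap_eq])
    (by simp [hσX, redMod_X]) (by simp [hσX])

theorem redMod_surjective : Function.Surjective (redMod π) :=
  PowerSeries.map_surjective _ Ideal.Quotient.mk_surjective

theorem redMod_smul (c : R) (f : PowerSeries R) :
    redMod π (c • f) = Ideal.Quotient.mk (Ideal.span {π}) c • redMod π f := by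
  simp [redMod, smul_eq_C_mul]

theorem gaussVal_C_mul [IsDomain R] (hπ : Prime π) (a : R) (f : PowerSeries R) :
    gaussVal π (C a * f) = emultiplicity π a + gaussVal π f := by
  simp only [gaussVal, coeff_C_mul, emultiplicity_mul hπ, ENat.add_iInf]

end GaussValuation

section DiscreteValuationRing

variable {R : Type*} [CommRing R] [IsDomain R] [IsDiscreteValuationRing R] {π : R}

theorem IsDiscreteValuationRing.dvd_iff_emultiplicity_le (hπ : Irreducible π) {a b : R} :
    a ∣ b ↔ emultiplicity π a ≤ emultiplicity π b := by
  have hπq := IsDiscreteValuationRing.associated_of_irreducible R hπ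
    (Classical.choose_spec (IsDiscreteValuationRing.exists_prime R)).irreducible
  rw [← IsDiscreteValuationRing.addVal_le_iff_dvd, IsDiscreteValuationRing.addVal,
    multiplicity_addValuation_apply, multiplicity_addValuation_apply,
    emultiplicity_eq_of_associated_left hπq, emultiplicity_eq_of_associated_left hπq]

theorem C_dvd_iff_emultiplicity_le_gaussVal (hπ : Irreducible π) {a : R} {f : PowerSeries R} :
    C a ∣ f ↔ emultiplicity π a ≤ gaussVal π f := by
  simp only [C_dvd_iff_forall_dvd_coeff, le_gaussVal_iff,
    IsDiscreteValuationRing.dvd_iff_emultiplicity_le hπ]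

theorem redMod_ne_zero_of_gaussVal_C_mul_eq (hπ : Irreducible π) {a : R} (ha : a ≠ 0)
    {g : PowerSeries R} (h : gaussVal π (C a * g) = emultiplicity π a) : redMod π g ≠ 0 := by
  have hπ' := hπ.prime
  have hfin : emultiplicity π a ≠ ⊤ :=
    finiteMultiplicity_iff_emultiplicity_ne_top.mp (FiniteMultiplicity.of_prime_left hπ' ha)
  rw [gaussVal_C_mul π hπ', ← add_zero (emultiplicity π a), add_assoc, zero_add] at h
  rw [ne_eq, ← gaussVal_pos_iff, ENat.add_right_injective_of_ne_top hfin h]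
  exact lt_irrefl 0

end DiscreteValuationRing

namespace AlgHom

variable {R A : Type*} [CommRing R] [CommRing A] [Algebra R A] (σ : A →ₐ[R] A) {a : R}
  (ha : IsSMulRegular A a) (hdvd : ∀ f, ∃ g, σ f - f = a • g)

/-- The operator `(σ - 1) / a`. -/
noncomputable def diffQuotient : A →ₗ[R] A where
  toFun f := (hdvd f).choose
  map_add' f g := ha <| by
    change a • (hdvd _).choose = a • ((hdvd f).choose + (hdvd g).choose)
    rw [smul_add, ← (hdvd _).choose_spec, ← (hdvd f).choose_spec, ← (hdvd g).choose_spec,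
      map_add]
    abel
  map_smul' c f := ha <| by
    change a • (hdvd _).choose = a • c • (hdvd f).choose
    rw [smul_comm a c, ← (hdvd _).choose_spec, ← (hdvd f).choose_spec, map_smul, smul_sub]

theorem smul_diffQuotient (f : A) : a • σ.diffQuotient ha hdvd f = σ f - f :=
  (hdvd f).choose_spec.symm

theorem diffQuotient_eq_of_sub_eq_smul {f g : A} (h : σ f - f = a • g) :
    σ.diffQuotient ha hdvd f = g :=
  ha <| by change a • _ = a • _; rw [smul_diffQuotient, h]

theorem diffQuotient_mul (f g : A) :
    σ.diffQuotient ha hdvd (f * g) =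
      σ f * σ.diffQuotient ha hdvd g + σ.diffQuotient ha hdvd f * g := by
  refine σ.diffQuotient_eq_of_sub_eq_smul ha hdvd ?_
  rw [smul_add, ← mul_smul_comm, ← smul_mul_assoc, smul_diffQuotient, smul_diffQuotient,
    map_mul]
  ring

end AlgHom

theorem exists_derivation_redMod_eq {R : Type*} [CommRing R] (π : R)
    (σ : PowerSeries R →+* PowerSeries R) (hσ : (redMod π).comp σ = redMod π)
    (d : PowerSeries R →ₗ[R] PowerSeries R) (hd : ∀ f g, d (f * g) = σ f * d g + d f * g) :
    ∃ D : Derivation (R ⧸ Ideal.span {π}) (PowerSeries (R ⧸ Ideal.span {π}))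
        (PowerSeries (R ⧸ Ideal.span {π})),
      ∀ f, D (redMod π f) = redMod π (d f) := by
  have hsurj := redMod_surjective π
  have hwd : ∀ f, redMod π (d (Function.surjInv hsurj (redMod π f))) = redMod π (d f) := by
    intro f
    have hker : redMod π (Function.surjInv hsurj (redMod π f) - f) = 0 := by
      rw [map_sub, Function.surjInv_eq hsurj, sub_self]
    obtain ⟨g, hg⟩ := (redMod_eq_zero_iff π).mp hker
    -- `d` is `R`-linear, so it sends `C π * g = π • g` to `π • d g`, which vanishes mod `π`
    rw [← sub_eq_zero, ← map_sub, ← map_sub, hg, ← smul_eq_C_mul, map_smul, redMod_smul,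
      Ideal.Quotient.eq_zero_iff_mem.mpr (Ideal.mem_span_singleton_self π), zero_smul]
  let D₀ : PowerSeries (R ⧸ Ideal.span {π}) →ₗ[R ⧸ Ideal.span {π}]
      PowerSeries (R ⧸ Ideal.span {π}) :=
    { toFun := fun y => redMod π (d (Function.surjInv hsurj y))
      map_add' := hsurj.forall₂.mpr fun f g => by
        rw [← map_add, hwd, hwd, hwd, map_add, map_add]
      map_smul' := fun c => hsurj.forall.mpr fun f => by
        obtain ⟨c, rfl⟩ := Ideal.Quotient.mk_surjective c
        simp only [← redMod_smul, hwd, map_smul, RingHom.id_apply] }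
  have hD₀ : ∀ f, D₀ (redMod π f) = redMod π (d f) := hwd
  refine ⟨Derivation.mk' D₀ (hsurj.forall₂.mpr fun f g => ?_), hD₀⟩
  rw [← map_mul, hD₀, hD₀, hD₀, hd, map_add, map_mul, map_mul, ← RingHom.comp_apply, hσ,
    smul_eq_mul, smul_eq_mul, mul_comm (redMod π (d f))]

theorem stmt2_general (R : Type*) [CommRing R] [IsDomain R] [IsDiscreteValuationRing R]
    (π : R) (hπ : Irreducible π)
    (σ : PowerSeries R ≃ₐ[R] PowerSeries R) (hσ : σ ≠ AlgEquiv.refl)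
    (hin : 0 < gaussVal π (σ (PowerSeries.X) - PowerSeries.X))
    (a : R) (ha : emultiplicity π a = ⨅ f : PowerSeries R, gaussVal π (σ f - f)) :
    ∃ D : Derivation (R ⧸ Ideal.span {π}) (PowerSeries (R ⧸ Ideal.span {π}))
        (PowerSeries (R ⧸ Ideal.span {π})),
      D ≠ 0 ∧
      ∀ f g : PowerSeries R, σ f - f = PowerSeries.C a * g →
        D (redMod π f) = redMod π g := by
  have hσ_redMod :=
    redMod_comp_eq_of_gaussVal_pos π (σ : PowerSeries R →ₐ[R] PowerSeries R) hin
  have hdvd : ∀ f, C a ∣ σ f - f := fun f =>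
    (C_dvd_iff_emultiplicity_le_gaussVal hπ).mpr (ha ▸ iInf_le _ f)
  have ha0 : a ≠ 0 := by
    rintro rfl
    exact hσ (AlgEquiv.ext fun f => by simpa [sub_eq_zero] using hdvd f)
  have hreg : IsSMulRegular (PowerSeries R) a := fun f g h =>
    mul_left_cancel₀ ((map_ne_zero_iff _ C_injective).mpr ha0) (by simpa [smul_eq_C_mul] using h)
  have hdvd' : ∀ f, ∃ g, σ f - f = a • g := fun f =>
    (hdvd f).imp fun g hg => by rw [hg, smul_eq_C_mul]
  set d := (σ : PowerSeries R →ₐ[R] PowerSeries R).diffQuotient hreg hdvd'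
  have hd_smul : ∀ f, a • d f = σ f - f := AlgHom.smul_diffQuotient _ _ _
  have hd_eq : ∀ f g, σ f - f = a • g → d f = g := fun _ _ h =>
    AlgHom.diffQuotient_eq_of_sub_eq_smul _ hreg hdvd' h
  obtain ⟨D, hD⟩ :=
    exists_derivation_redMod_eq π σ hσ_redMod d (AlgHom.diffQuotient_mul _ _ _)
  refine ⟨D, fun hD0 => ?_, fun f g hfg => ?_⟩
  · obtain ⟨f₀, hf₀⟩ := ENat.exists_eq_iInf fun f => gaussVal π (σ f - f)
    refine redMod_ne_zero_of_gaussVal_C_mul_eq hπ ha0 (g := d f₀) ?_ (by rw [← hD, hD0]; rfl)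
    rw [← smul_eq_C_mul, hd_smul]
    exact hf₀.trans ha.symm
  · rw [hD, hd_eq f g (by rwa [smul_eq_C_mul])]

/-- Let `R` be a complete discrete valuation ring of mixed characteristic `(0,p)` with
algebraically closed residue field, `A = R[[z]]`, and `σ ≠ id` an `R`-automorphism of `A`
lying in the inertia group for the Gauss valuation.  Let `a ∈ R` realize the minimum of
`val_Y(σ(f) - f)` over `f ∈ A`.  Then `f̄ ↦ ((σ(f) - f)/a)‾` is a well-defined nonzero
`k`-derivation of `Ā = k[[z]]`, where `k = R/(π)`. -/
theorem stmt2 (R : Type*) [CommRing R] [IsDomain R] [IsDiscreteValuationRing R]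
    [CharZero R] (π : R) (hπ : Irreducible π)
    [IsAdicComplete (Ideal.span {π}) R]
    (p : ℕ) (hp : p.Prime) (hchar : CharP (R ⧸ Ideal.span {π}) p)
    (halgcl : ∀ f : Polynomial (R ⧸ Ideal.span {π}), f.Monic → 0 < f.degree →
      ∃ x, Polynomial.eval x f = 0)
    (σ : PowerSeries R ≃ₐ[R] PowerSeries R) (hσ : σ ≠ AlgEquiv.refl)
    (hin : 0 < gaussVal π (σ (PowerSeries.X) - PowerSeries.X))
    (a : R) (ha : emultiplicity π a = ⨅ f : PowerSeries R, gaussVal π (σ f - f)) :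
    ∃ D : Derivation (R ⧸ Ideal.span {π}) (PowerSeries (R ⧸ Ideal.span {π}))
        (PowerSeries (R ⧸ Ideal.span {π})),
      D ≠ 0 ∧
      ∀ f g : PowerSeries R, σ f - f = PowerSeries.C a * g →
        D (redMod π f) = redMod π g :=
  stmt2_general R π hπ σ hσ hin a ha
end

section
/- In the setting above, δ_Y^G is a nonnegative virtual character: ⟨ψ, δ_Y^G⟩ ≥ 0 for every character ψ of a complex representation of G. -/
/-! Write `d(σ) = val_Y(σ(z) - z)`. Since the Gauss valuation is ultrametric and invariant under
`R`-algebra automorphisms, `d(στ) ≥ min (d σ) (d τ)` and `d(σ⁻¹) = d σ`, so the sets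
`G_j = {σ | j ≤ d σ}` are subgroups. Layer-cake summation turns
`⟨ψ, δ_Y^G⟩ = Σ_σ d(σ) (ψ(1) - ψ(σ))^*` into `Σ_{j ≥ 1} Σ_{σ ∈ G_j} (ψ(1) - ψ(σ))^*`, and each
inner sum equals `|G_j| (dim V - dim V^{G_j}) ≥ 0` because averaging a character over a finite
group computes the dimension of the invariants. -/

open PowerSeries Finset

open Classical in
/-- The depth character `δ_Y^G`, built from the function
`σ ↦ val_Y(σ(z) - z) = vq σ`: `δ(σ) = -|G|·vq σ` for `σ ≠ 1` and
`δ(1) = -Σ_{σ≠1} δ(σ)`. -/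
noncomputable def deltaY {G : Type*} [Group G] [Fintype G] (vq : G → ℕ) : G → ℂ :=
  fun σ => if σ = 1 then ∑ τ ∈ Finset.univ.erase (1 : G), (Fintype.card G : ℂ) * vq τ
           else -(Fintype.card G : ℂ) * vq σ

namespace PowerSeries

variable {R : Type*} [CommRing R] (π : R)

theorem natCast_le_gaussVal_iff (f : R⟦X⟧) (n : ℕ) :
    (n : ℕ∞) ≤ gaussVal π f ↔ C (π ^ n) ∣ f := by
  simp only [gaussVal, le_iInf_iff, ← pow_dvd_iff_le_emultiplicity]
  constructor
  · intro h
    exact ⟨mk fun i => (h i).choose, ext fun i => by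
      rw [coeff_C_mul, coeff_mk, ← (h i).choose_spec]⟩
  · rintro ⟨g, rfl⟩ i
    exact (coeff_C_mul i g _).symm ▸ dvd_mul_right _ _

theorem gaussVal_algEquiv (e : R⟦X⟧ ≃ₐ[R] R⟦X⟧) (f : R⟦X⟧) :
    gaussVal π (e f) = gaussVal π f := by
  refine ENat.eq_of_forall_natCast_le_iff fun n => ?_
  have hC : e (C (π ^ n)) = C (π ^ n) := e.commutes (π ^ n)
  rw [natCast_le_gaussVal_iff, natCast_le_gaussVal_iff, ← map_dvd_iff e (a := C (π ^ n)) (b := f),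
    hC]

theorem gaussVal_neg (f : R⟦X⟧) : gaussVal π (-f) = gaussVal π f := by
  simp [gaussVal, emultiplicity_neg]

theorem min_gaussVal_le_gaussVal_add (f g : R⟦X⟧) :
    min (gaussVal π f) (gaussVal π g) ≤ gaussVal π (f + g) :=
  le_iInf fun i => (map_add (coeff i) f g).symm ▸
    (min_le_min (iInf_le _ i) (iInf_le _ i)).trans min_le_emultiplicity_add

end PowerSeries

section Depth

variable {R : Type*} [CommRing R] (π : R) {G : Type*} [Group G] (φ : G →* (R⟦X⟧ ≃ₐ[R] R⟦X⟧))

noncomputable def depth (σ : G) : ℕ∞ := gaussVal π (φ σ X - X)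

theorem depth_one : depth π φ 1 = ⊤ := by
  simp [depth, gaussVal]

theorem depth_inv (σ : G) : depth π φ σ⁻¹ = depth π φ σ := by
  have h : φ σ⁻¹ X - X = -φ σ⁻¹ (φ σ X - X) := by
    rw [map_sub, ← AlgEquiv.mul_apply, ← map_mul, inv_mul_cancel, map_one, AlgEquiv.one_apply,
      neg_sub]
  rw [depth, h, gaussVal_neg, gaussVal_algEquiv, depth]

theorem min_depth_le_depth_mul (σ τ : G) :
    min (depth π φ σ) (depth π φ τ) ≤ depth π φ (σ * τ) := by
  have h : φ (σ * τ) X - X = φ σ (φ τ X - X) + (φ σ X - X) := by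
    rw [map_mul, AlgEquiv.mul_apply, map_sub]
    ring
  rw [min_comm, depth, depth, ← gaussVal_algEquiv π (φ σ), depth, h]
  exact min_gaussVal_le_gaussVal_add π _ _

def depthSubgroup (j : ℕ∞) : Subgroup G where
  carrier := {σ | j ≤ depth π φ σ}
  one_mem' := by simp [depth_one]
  mul_mem' {σ τ} hσ hτ := (le_min hσ hτ).trans (min_depth_le_depth_mul π φ σ τ)
  inv_mem' {σ} hσ := (depth_inv π φ σ).ge.trans' hσ

theorem mem_depthSubgroup {j : ℕ∞} {σ : G} : σ ∈ depthSubgroup π φ j ↔ j ≤ depth π φ σ :=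
  Iff.rfl

end Depth

namespace Representation

open Module

variable {k G V : Type*} [Field k] [CharZero k] [Group G] [Fintype G] [AddCommGroup V]
  [Module k V] [FiniteDimensional k V]

theorem sum_character_eq_card_mul_finrank_invariants (ρ : Representation k G V) :
    ∑ g, ρ.character g = Nat.card G * finrank k (invariants ρ) := by
  have : Invertible (Nat.card G : k) := invertibleOfNonzero (by simp)
  rw [← card_inv_mul_sum_char_eq_finrank, mul_inv_cancel_left₀ (by simp)]

theorem sum_character_one_sub_character (ρ : Representation k G V) :
    ∑ g, (ρ.character 1 - ρ.character g) =
      ((Nat.card G * (finrank k V - finrank k (invariants ρ)) : ℕ) : k) := by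
  rw [Finset.sum_sub_distrib, sum_character_eq_card_mul_finrank_invariants, Finset.sum_const,
    char_one, Finset.card_univ, ← Nat.card_eq_fintype_card, Nat.cast_mul,
    Nat.cast_sub (Submodule.finrank_le _), nsmul_eq_mul, mul_sub]

end Representation

theorem Finset.sum_nsmul_eq_sum_Icc_sum_ite {ι M : Type*} [AddCommMonoid M] (s : Finset ι)
    (f : ι → ℕ) (g : ι → M) {N : ℕ} (hN : ∀ i ∈ s, f i ≤ N) :
    ∑ i ∈ s, f i • g i = ∑ j ∈ Icc 1 N, ∑ i ∈ s, if j ≤ f i then g i else 0 := by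
  rw [Finset.sum_comm]
  refine Finset.sum_congr rfl fun i hi => ?_
  have hIcc : {j ∈ Icc 1 N | j ≤ f i} = Icc 1 (f i) := by
    ext j
    simp only [Finset.mem_filter, Finset.mem_Icc]
    have := hN i hi
    omega
  rw [← Finset.sum_filter, hIcc, Finset.sum_const, Nat.card_Icc, Nat.add_sub_cancel]

theorem innerCF_deltaY {G : Type*} [Group G] [Fintype G] (χ : G → ℂ) (vq : G → ℕ) :
    innerCF χ (deltaY vq) = ∑ σ, vq σ * starRingEnd ℂ (χ 1 - χ σ) := by
  classical
  have hcard : (Fintype.card G : ℂ) ≠ 0 := by simp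
  rw [innerCF, ← Finset.add_sum_erase _ _ (Finset.mem_univ 1),
    ← Finset.add_sum_erase _ _ (Finset.mem_univ 1), sub_self, map_zero, mul_zero, zero_add,
    deltaY, if_pos rfl, inv_mul_eq_iff_eq_mul₀ hcard, Finset.mul_sum, Finset.mul_sum,
    ← Finset.sum_add_distrib]
  refine Finset.sum_congr rfl fun σ hσ => ?_
  rw [deltaY, if_neg (Finset.ne_of_mem_erase hσ), map_sub]
  ring

theorem stmt6_general (R : Type*) [CommRing R] (π : R)
    (G : Type) [Group G] [Fintype G]
    (φ : G →* (PowerSeries R ≃ₐ[R] PowerSeries R))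
    (vq : G → ℕ)
    (hvq : ∀ σ : G, σ ≠ 1 → (vq σ : ℕ∞) = gaussVal π (φ σ PowerSeries.X - PowerSeries.X))
    (V : FDRep ℂ G) :
    ∃ q : ℝ, 0 ≤ q ∧ innerCF V.character (deltaY vq) = (q : ℂ) := by
  classical
  set c : G → ℂ := fun σ => starRingEnd ℂ (V.character 1 - V.character σ)
  set n : Subgroup G → ℕ := fun H =>
    Nat.card H *
      (Module.finrank ℂ V - Module.finrank ℂ (Representation.invariants (V.ρ.comp H.subtype)))
  have hsum_subgroup (H : Subgroup G) : ∑ h : H, c h = n H := by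
    rw [← map_natCast (starRingEnd ℂ), ← Representation.sum_character_one_sub_character, map_sum]
    rfl
  have hlayer (j : ℕ) :
      ∑ σ, (if j ≤ vq σ then c σ else 0) = ∑ h : depthSubgroup π φ j, c h := by
    rw [← Finset.sum_subtype {σ | σ ∈ depthSubgroup π φ j} (by simp), Finset.sum_filter]
    refine Finset.sum_congr rfl fun σ _ => ?_
    by_cases hσ : σ = 1
    -- `vq 1` is arbitrary, but the summand at `1` vanishes.
    · simp [hσ, c]
    · simp only [mem_depthSubgroup, depth, ← hvq σ hσ, Nat.cast_le]
  have hvq_le (σ : G) (_ : σ ∈ Finset.univ) : vq σ ≤ Finset.univ.sup vq :=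
    Finset.le_sup (Finset.mem_univ σ)
  refine ⟨(∑ j ∈ Finset.Icc 1 (Finset.univ.sup vq), n (depthSubgroup π φ j) : ℕ),
    Nat.cast_nonneg _, ?_⟩
  calc innerCF V.character (deltaY vq) = ∑ σ, vq σ • c σ := by
        simp only [innerCF_deltaY, nsmul_eq_mul, c]
    _ = ∑ j ∈ Finset.Icc 1 (Finset.univ.sup vq), ∑ σ, if j ≤ vq σ then c σ else 0 :=
        Finset.sum_nsmul_eq_sum_Icc_sum_ite _ _ _ hvq_le
    _ = _ := by
        simp only [hlayer, hsum_subgroup]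
        push_cast
        rfl

/-- The depth character `δ_Y^G` is a nonnegative virtual character: `⟨ψ, δ_Y^G⟩ ≥ 0` for
every character `ψ` of a finite-dimensional complex representation of `G`. -/
theorem stmt6 (R : Type*) [CommRing R] [IsDomain R] [IsDiscreteValuationRing R]
    [CharZero R] (π : R) (hπ : Irreducible π)
    [IsAdicComplete (Ideal.span {π}) R]
    (p : ℕ) (hp : p.Prime) (hchar : CharP (R ⧸ Ideal.span {π}) p)
    (G : Type) [Group G] [Fintype G]
    (φ : G →* (PowerSeries R ≃ₐ[R] PowerSeries R)) (hφ : Function.Injective φ)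
    (vq : G → ℕ)
    (hvq : ∀ σ : G, σ ≠ 1 → (vq σ : ℕ∞) = gaussVal π (φ σ PowerSeries.X - PowerSeries.X))
    (V : FDRep ℂ G) :
    ∃ q : ℝ, 0 ≤ q ∧ innerCF V.character (deltaY vq) = (q : ℂ) :=
  stmt6_general R π G φ vq hvq V
end

section
/- Let K be a complete discretely valued field of characteristic 0 with algebraically closed residue field of characteristic p, let σ be a K-automorphism of finite order of the open disk Y = (Spf R[[z]]) ⊗ K with σ ≠ id. Then every fixed point of σ in Y(K̄) is simple, i.e., every zero of the power series σ(z) - z ∈ R[[z]] is a simple zero. -/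
/-!
Write `φ` for the coefficient map `R⟦X⟧ → R'⟦X⟧`, `t = X - y`, `D = φ(σ X) - X`, and `𝔪` for
the maximal ideal of the Noetherian local ring `R'⟦X⟧`. Since `R'` need not be complete,
`φ ∘ σ^k` can only be compared with a composition of power series modulo `𝔪^N`, where a Taylor
expansion to first order is available.

If `t^(e+2) ∣ D`, then `t^(e+1) ∣ D'`, and the Taylor expansion gives, by induction on `k`,
`φ(σ^k X) ≡ X + k D` modulo `t^(e+3)` and `𝔪^N`. For `k = ord σ` this says that `k D` lies in
`(t^(e+3)) + 𝔪^N` for every `N`, hence in `(t^(e+3))` by Krull's intersection theorem. As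
`k ≠ 0` in `R'` and the uniformizer of `R'` divides `y`, the factor `k` can be cancelled modulo
`t`, so `t^(e+3) ∣ D`. Starting from a double zero, `D` is then divisible by every power of
`t ∈ 𝔪`, so `D = 0` by Krull again, i.e. `σ X = X`, and then `σ = id`.
-/

open PowerSeries IsLocalRing

theorem IsLocalRing.mem_of_forall_mem_sup_maximalIdeal_pow {A : Type*} [CommRing A]
    [IsNoetherianRing A] [IsLocalRing A] {I : Ideal A} {x : A}
    (h : ∀ n : ℕ, x ∈ I ⊔ maximalIdeal A ^ n) : x ∈ I := by
  rw [← Ideal.Quotient.eq_zero_iff_mem]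
  refine IsHausdorff.haus (inferInstance : IsHausdorff (maximalIdeal A) (A ⧸ I)) _ fun n => ?_
  obtain ⟨i, hi, m, hm, rfl⟩ := Submodule.mem_sup.mp (h n)
  rw [SModEq.zero, map_add, Ideal.Quotient.eq_zero_iff_mem.mpr hi, zero_add,
    ← mul_one m, map_mul, map_one, ← Ideal.Quotient.algebraMap_eq, ← Algebra.smul_def]
  exact Submodule.smul_mem_smul hm trivial

theorem Ideal.mul_mem_span_pow_sup {A : Type*} [CommRing A] {I : Ideal A} {t x y : A}
    {a b c : ℕ} (hc : c ≤ a + b) (hx : x ∈ Ideal.span {t ^ a} ⊔ I)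
    (hy : y ∈ Ideal.span {t ^ b} ⊔ I) : x * y ∈ Ideal.span {t ^ c} ⊔ I := by
  obtain ⟨_, hx', x'', hx'', rfl⟩ := Submodule.mem_sup.mp hx
  obtain ⟨_, hy', y'', hy'', rfl⟩ := Submodule.mem_sup.mp hy
  obtain ⟨x', rfl⟩ := Ideal.mem_span_singleton'.mp hx'
  obtain ⟨y', rfl⟩ := Ideal.mem_span_singleton'.mp hy'
  refine Submodule.mem_sup.mpr ⟨x' * t ^ a * (y' * t ^ b), ?_, x'' * (y' * t ^ b + y'') +
    x' * t ^ a * y'', add_mem (I.mul_mem_right _ hx'') (I.mul_mem_left _ hy''), by ring⟩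
  exact Ideal.mem_span_singleton.mpr ((pow_dvd_pow t hc).trans ⟨x' * y', by rw [pow_add]; ring⟩)

namespace PowerSeries

theorem mem_maximalIdeal_iff {R : Type*} [CommRing R] [IsLocalRing R] {g : R⟦X⟧} :
    g ∈ maximalIdeal R⟦X⟧ ↔ constantCoeff g ∈ maximalIdeal R := by
  simp [mem_maximalIdeal, mem_nonunits_iff, isUnit_iff_constantCoeff]

theorem X_sub_C_mem_maximalIdeal {R : Type*} [CommRing R] [IsLocalRing R] {y : R}
    (hy : y ∈ maximalIdeal R) : X - C y ∈ maximalIdeal R⟦X⟧ :=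
  mem_maximalIdeal_iff.mpr (by simpa using hy)

theorem X_mem_maximalIdeal {R : Type*} [CommRing R] [IsLocalRing R] :
    X ∈ maximalIdeal R⟦X⟧ := by
  simpa using X_sub_C_mem_maximalIdeal (zero_mem (maximalIdeal R))

theorem pow_dvd_derivative_of_pow_succ_dvd {R : Type*} [CommRing R] {t g : R⟦X⟧} {e : ℕ}
    (h : t ^ (e + 1) ∣ g) : t ^ e ∣ d⁄dX R g := by
  obtain ⟨u, rfl⟩ := h
  rw [Derivation.leibniz, derivative_pow, smul_eq_mul, smul_eq_mul, pow_succ]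
  exact ⟨t * d⁄dX R u + u * ((e + 1 : ℕ) * d⁄dX R t), by push_cast; ring⟩

theorem X_sub_C_dvd_of_dvd_C_mul_of_dvd {R : Type*} [CommRing R] [IsDomain R] {a y : R}
    {g : R⟦X⟧} (ha : a ≠ 0) (hay : a ∣ y) (h : X - C y ∣ C a * g) : X - C y ∣ g := by
  obtain ⟨q, hq⟩ := h
  have hcoeff : ∀ j, a ∣ coeff j q := fun j => by
    have := congrArg (coeff (j + 1)) hq
    simp only [coeff_C_mul, sub_mul, map_sub, coeff_succ_X_mul] at this
    rw [show coeff j q = a * coeff (j + 1) g + y * coeff (j + 1) q by linear_combination -this]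
    exact dvd_add (dvd_mul_right _ _) (hay.mul_right _)
  choose c hc using hcoeff
  have hq' : q = C a * mk c := by ext j; simp [coeff_C_mul, hc]
  refine ⟨mk c, mul_left_cancel₀ ((map_ne_zero_iff _ C_injective).mpr ha) ?_⟩
  rw [hq, hq']
  ring

theorem X_sub_C_dvd_of_dvd_C_mul {R : Type*} [CommRing R] [IsDomain R]
    [IsDiscreteValuationRing R] {r y : R} {g : R⟦X⟧} (hr : r ≠ 0) (hy : y ∈ maximalIdeal R)
    (h : X - C y ∣ C r * g) : X - C y ∣ g := by
  obtain ⟨ϖ, hϖ⟩ := IsDiscreteValuationRing.exists_irreducible R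
  obtain ⟨k, u, rfl⟩ := IsDiscreteValuationRing.eq_unit_mul_pow_irreducible hr hϖ
  have hϖy : ϖ ∣ y := by rwa [← Ideal.mem_span_singleton, ← hϖ.maximalIdeal_eq]
  clear hr
  induction k generalizing g with
  | zero => simpa [mul_assoc, (u.isUnit.map C).dvd_mul_left] using h
  | succ k ih =>
    refine X_sub_C_dvd_of_dvd_C_mul_of_dvd hϖ.ne_zero hϖy (ih ?_)
    rwa [← mul_assoc, ← map_mul, mul_assoc, ← pow_succ]

theorem ringHom_apply_eq_eval₂_trunc_add {R B : Type*} [CommRing R] [CommRing B]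
    (ψ : R⟦X⟧ →+* B) (g : R⟦X⟧) (n : ℕ) :
    ψ g = (trunc n g).eval₂ (ψ.comp C) (ψ X) + ψ X ^ n * ψ (mk fun i ↦ coeff (i + n) g) := by
  conv_lhs => rw [g.eq_X_pow_mul_shift_add_trunc n, ← Polynomial.eval₂_C_X_eq_coe]
  rw [map_add, map_mul, map_pow, Polynomial.hom_eval₂, add_comm]

theorem algEquiv_eq_refl_of_apply_X {R : Type*} [CommRing R] (σ : R⟦X⟧ ≃ₐ[R] R⟦X⟧)
    (hσ : σ X = X) : σ = AlgEquiv.refl := by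
  have hC : (σ : R⟦X⟧ →+* R⟦X⟧).comp C = C := RingHom.ext fun r => by
    simpa [algebraMap_apply] using σ.commutes r
  ext g n
  have := ringHom_apply_eq_eval₂_trunc_add (σ : R⟦X⟧ →+* R⟦X⟧) g (n + 1)
  simp only [RingHom.coe_coe, hC, hσ, Polynomial.eval₂_C_X_eq_coe] at this
  simp [this, coeff_X_pow_mul', coeff_trunc]

section Iteration

variable {R R' : Type*} [CommRing R] [CommRing R'] [IsLocalRing R'] (f : R →+* R')

/-- `ψ` stands in for the composition `g ↦ (map f g)(ψ X)`, which need not make sense; this is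
its first-order Taylor expansion around `X`. -/
theorem apply_sub_sub_derivative_mul_mem (ψ : R⟦X⟧ →+* R'⟦X⟧) (hψ : ψ.comp C = C.comp f)
    (hψX : ψ X ∈ maximalIdeal R'⟦X⟧) (g : R⟦X⟧) (N : ℕ) :
    ψ g - map f g - d⁄dX R' (map f g) * (ψ X - X) ∈
      Ideal.span {(ψ X - X) ^ 2} ⊔ maximalIdeal R'⟦X⟧ ^ N := by
  set δ := ψ X - X
  have hψg := ringHom_apply_eq_eval₂_trunc_add ψ g (N + 1)
  rw [hψ, ← Polynomial.eval₂_map, ← Polynomial.eval_map, ← trunc_map] at hψg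
  have hg := (map f g).eq_X_pow_mul_shift_add_trunc (N + 1)
  have hg' := (d⁄dX R' (map f g)).eq_X_pow_mul_shift_add_trunc N
  rw [trunc_derivative] at hg'
  obtain ⟨k, hk⟩ := ((trunc (N + 1) (map f g)).map C).binomExpansion X δ
  rw [show X + δ = ψ X from add_sub_cancel _ _] at hk
  simp only [Polynomial.eval_map, Polynomial.derivative_map, Polynomial.eval₂_C_X_eq_coe] at hk hψg
  generalize (mk fun i ↦ coeff (i + (N + 1)) g) = a at hψg
  generalize (mk fun i ↦ coeff (i + (N + 1)) (map f g)) = b at hg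
  generalize (mk fun i ↦ coeff (i + N) (d⁄dX R' (map f g))) = c at hg'
  have hpow : ∀ x ∈ maximalIdeal R'⟦X⟧, x ^ (N + 1) ∈ maximalIdeal R'⟦X⟧ ^ N := fun x hx =>
    Ideal.pow_le_pow_right N.le_succ (Ideal.pow_mem_pow hx _)
  have htail : ψ X ^ (N + 1) * ψ a - X ^ (N + 1) * b - X ^ N * c * δ ∈
      maximalIdeal R'⟦X⟧ ^ N :=
    sub_mem (sub_mem (Ideal.mul_mem_right _ _ (hpow _ hψX))
      (Ideal.mul_mem_right _ _ (hpow _ X_mem_maximalIdeal)))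
      (Ideal.mul_mem_right _ _ (Ideal.mul_mem_right _ _ (Ideal.pow_mem_pow X_mem_maximalIdeal N)))
  refine Submodule.mem_sup.mpr
    ⟨k * δ ^ 2, Ideal.mul_mem_left _ _ (Ideal.mem_span_singleton_self _), _, htail, ?_⟩
  linear_combination hg + δ * hg' - hψg - hk

variable (σ : R⟦X⟧ ≃ₐ[R] R⟦X⟧) {t : R'⟦X⟧} {e : ℕ} (ht : t ∈ maximalIdeal R'⟦X⟧)
  (hD : t ^ (e + 2) ∣ map f (σ X - X)) (hD' : t ^ (e + 1) ∣ d⁄dX R' (map f (σ X - X)))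
include ht hD hD'

theorem map_pow_succ_apply_X_sub_mem {k : ℕ}
    (ih : ∀ N : ℕ, map f ((σ ^ k) X) - X - (k : R'⟦X⟧) * map f (σ X - X) ∈
      Ideal.span {t ^ (e + 3)} ⊔ maximalIdeal R'⟦X⟧ ^ N) (N : ℕ) :
    map f ((σ ^ (k + 1)) X) - X - ((k + 1 : ℕ) : R'⟦X⟧) * map f (σ X - X) ∈
      Ideal.span {t ^ (e + 3)} ⊔ maximalIdeal R'⟦X⟧ ^ N := by
  set D := map f (σ X - X)
  set δ := map f ((σ ^ k) X) - X
  set ψ := (map f).comp ((σ ^ k : R⟦X⟧ ≃ₐ[R] R⟦X⟧) : R⟦X⟧ →+* R⟦X⟧)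
  have hψ : ψ.comp C = C.comp f := RingHom.ext fun r => by
    simpa [ψ, algebraMap_apply] using congrArg (map f) ((σ ^ k).commutes r)
  have hψXδ : ψ X - X = δ := rfl
  have hψX : ψ X ∈ maximalIdeal R'⟦X⟧ := by
    have hL : Ideal.span {t ^ (e + 3)} ⊔ maximalIdeal R'⟦X⟧ ^ 1 ≤ maximalIdeal R'⟦X⟧ :=
      sup_le ((Ideal.span_singleton_le_iff_mem _).mpr (Ideal.pow_mem_of_mem _ ht _ (by omega)))
        (pow_one _).le
    have hDm : D ∈ maximalIdeal R'⟦X⟧ :=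
      Ideal.mem_of_dvd _ hD (Ideal.pow_mem_of_mem _ ht _ (by omega))
    rw [show ψ X = (δ - (k : R'⟦X⟧) * D) + X + (k : R'⟦X⟧) * D by rw [← hψXδ]; ring]
    exact add_mem (add_mem (hL (ih 1)) X_mem_maximalIdeal) (Ideal.mul_mem_left _ _ hDm)
  have hδ : δ ∈ Ideal.span {t ^ (e + 2)} ⊔ maximalIdeal R'⟦X⟧ ^ N := by
    rw [show δ = (k : R'⟦X⟧) * D + (δ - k * D) by ring]
    exact add_mem (Ideal.mem_sup_left (Ideal.mul_mem_left _ _ (Ideal.mem_span_singleton.mpr hD)))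
      (sup_le_sup_right (Ideal.span_singleton_le_span_singleton.mpr (pow_dvd_pow t (by omega)))
        _ (ih N))
  have hD'δ : d⁄dX R' D * δ ∈ Ideal.span {t ^ (e + 3)} ⊔ maximalIdeal R'⟦X⟧ ^ N :=
    Ideal.mul_mem_span_pow_sup (by omega)
      (Ideal.mem_sup_left (Ideal.mem_span_singleton.mpr hD')) hδ
  have hsq : Ideal.span {δ ^ 2} ⊔ maximalIdeal R'⟦X⟧ ^ N ≤
      Ideal.span {t ^ (e + 3)} ⊔ maximalIdeal R'⟦X⟧ ^ N :=
    sup_le ((Ideal.span_singleton_le_iff_mem _).mpr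
      (sq δ ▸ Ideal.mul_mem_span_pow_sup (by omega) hδ hδ)) le_sup_right
  have htaylor := hsq (apply_sub_sub_derivative_mul_mem f ψ hψ hψX (σ X) N)
  have hψσ : ψ (σ X) = map f ((σ ^ (k + 1)) X) := by simp [ψ, pow_succ]
  have hσX : map f (σ X) = X + D := by simp [D]
  rw [hψσ, hσX, hψXδ, map_add, derivative_X] at htaylor
  rw [show map f ((σ ^ (k + 1)) X) - X - ((k + 1 : ℕ) : R'⟦X⟧) * D =
      (map f ((σ ^ (k + 1)) X) - (X + D) - (1 + d⁄dX R' D) * δ) + (δ - (k : R'⟦X⟧) * D) +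
        d⁄dX R' D * δ by push_cast; ring]
  exact add_mem (add_mem htaylor (ih N)) hD'δ

theorem map_pow_apply_X_sub_mem (k N : ℕ) :
    map f ((σ ^ k) X) - X - (k : R'⟦X⟧) * map f (σ X - X) ∈
      Ideal.span {t ^ (e + 3)} ⊔ maximalIdeal R'⟦X⟧ ^ N := by
  induction k generalizing N with
  | zero => simp
  | succ k ih => exact map_pow_succ_apply_X_sub_mem f σ ht hD hD' ih N

end Iteration

theorem X_sub_C_pow_succ_dvd_of_pow_dvd {R R' : Type*} [CommRing R] [CommRing R'] [IsDomain R']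
    [IsDiscreteValuationRing R'] (f : R →+* R') (σ : R⟦X⟧ ≃ₐ[R] R⟦X⟧) {n : ℕ}
    (hσn : σ ^ n = 1) (hn : (n : R') ≠ 0) {y : R'} (hy : y ∈ maximalIdeal R') {e : ℕ}
    (h : (X - C y) ^ (e + 2) ∣ map f (σ X - X)) : (X - C y) ^ (e + 3) ∣ map f (σ X - X) := by
  have ht0 : (X : R'⟦X⟧) - C y ≠ 0 := fun h0 => by simpa using congrArg (coeff 1) h0
  have hmem := map_pow_apply_X_sub_mem f σ (X_sub_C_mem_maximalIdeal hy) h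
    (pow_dvd_derivative_of_pow_succ_dvd h) n
  rw [hσn, AlgEquiv.one_apply, map_X, sub_self, zero_sub] at hmem
  have hnD := mem_of_forall_mem_sup_maximalIdeal_pow fun N => neg_mem_iff.mp (hmem N)
  obtain ⟨u, hu⟩ := h
  rw [hu, Ideal.mem_span_singleton, ← map_natCast C, pow_succ, mul_left_comm,
    mul_dvd_mul_iff_left (pow_ne_zero _ ht0)] at hnD
  obtain ⟨v, rfl⟩ := X_sub_C_dvd_of_dvd_C_mul hn hy hnD
  exact ⟨v, by rw [hu]; ring⟩

end PowerSeries

theorem stmt7_general (R : Type*) [CommRing R]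
    [CharZero R]
    (σ : PowerSeries R ≃ₐ[R] PowerSeries R) (hσ : σ ≠ AlgEquiv.refl)
    (hfin : IsOfFinOrder σ)
    (R' : Type*) [CommRing R'] [IsDomain R'] [IsDiscreteValuationRing R']
    [Algebra R R'] (hinj : Function.Injective (algebraMap R R'))
    (y : R') (hy : ¬IsUnit y) :
    ¬((PowerSeries.X - PowerSeries.C (R := R') y) ^ 2 ∣
      PowerSeries.map (algebraMap R R') (σ PowerSeries.X - PowerSeries.X)) := by
  intro h2
  have : CharZero R' := charZero_of_injective_algebraMap hinj
  have hn : (orderOf σ : R') ≠ 0 := Nat.cast_ne_zero.mpr hfin.orderOf_pos.ne'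
  have hy' : y ∈ maximalIdeal R' := hy
  have hall : ∀ e, (X - C y) ^ (e + 2) ∣ map (algebraMap R R') (σ X - X) := by
    intro e
    induction e with
    | zero => exact h2
    | succ e ih => exact X_sub_C_pow_succ_dvd_of_pow_dvd _ σ (pow_orderOf_eq_one σ) hn hy' ih
  have hD : map (algebraMap R R') (σ X - X) = 0 := by
    simpa using mem_of_forall_mem_sup_maximalIdeal_pow (I := ⊥) fun N =>
      Ideal.mem_sup_right (Ideal.mem_of_dvd _ ((pow_dvd_pow _ (by omega)).trans (hall N))
        (Ideal.pow_mem_pow (X_sub_C_mem_maximalIdeal hy') N))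
  rw [← map_zero (map (algebraMap R R')), (map_injective _ hinj).eq_iff, sub_eq_zero] at hD
  exact hσ (algEquiv_eq_refl_of_apply_X σ hD)

/-- Let `σ ≠ id` be an automorphism of finite order of the open disk over a complete
discretely valued field `K` of characteristic `0` (equivalently, an `R`-algebra
automorphism of `R[[z]]`).  Then every fixed point of `σ` is simple: for every point `y`
of the open disk over an extension (i.e. a non-unit `y` in an extension `R'` of `R`),
the linear factor `z - y` divides `σ(z) - z` at most once. -/
theorem stmt7 (R : Type*) [CommRing R] [IsDomain R] [IsDiscreteValuationRing R]
    [CharZero R] (π : R) (hπ : Irreducible π)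
    [IsAdicComplete (Ideal.span {π}) R]
    (p : ℕ) (hp : p.Prime) (hchar : CharP (R ⧸ Ideal.span {π}) p)
    (σ : PowerSeries R ≃ₐ[R] PowerSeries R) (hσ : σ ≠ AlgEquiv.refl)
    (hfin : IsOfFinOrder σ)
    (R' : Type*) [CommRing R'] [IsDomain R'] [IsDiscreteValuationRing R']
    [Algebra R R'] (hinj : Function.Injective (algebraMap R R'))
    (y : R') (hy : ¬IsUnit y)
    (hzero : (PowerSeries.X - PowerSeries.C (R := R') y) ∣
      PowerSeries.map (algebraMap R R') (σ PowerSeries.X - PowerSeries.X)) :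
    ¬((PowerSeries.X - PowerSeries.C (R := R') y) ^ 2 ∣
      PowerSeries.map (algebraMap R R') (σ PowerSeries.X - PowerSeries.X)) :=
  stmt7_general R σ hσ hfin R' hinj y hy
end

section
/- Let G be a finite group acting faithfully on the open p-adic disk Y with a unique fixed point y (i.e., y is the only point of Y(K̄) with nontrivial stabilizer, and it is fixed by all of G). Then G is cyclic. -/
open PowerSeries

/-!
Every `σ ∈ G` fixes `z = 0`, so modulo `z²` it acts linearly and `σ ↦ σ'(0)`, the coefficient
of `z` in `σ(z)`, is a character `χ : G → R`. If `σ ≠ 1` had `χ(σ) = 1`, then `σ(z) - z`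
would have no term of degree `≤ 1`, and neither would its primitive part `g`, so the reduction
of `g` could not have `z`-order `1`. Hence `χ` is injective, and a finite group of units of
a domain is cyclic.
-/

namespace PowerSeries

variable {R : Type*} [CommRing R]

theorem exists_eq_C_mul_X_add_X_sq_mul {f : R⟦X⟧} (hf : constantCoeff f = 0) :
    ∃ k : R⟦X⟧, f = C (coeff 1 f) * X + X ^ 2 * k := by
  obtain ⟨h, rfl⟩ := X_dvd_iff.mpr hf
  obtain ⟨k, hk⟩ := X_dvd_iff.mpr (show constantCoeff (h - C (constantCoeff h)) = 0 by simp)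
  refine ⟨k, ?_⟩
  rw [coeff_succ_X_mul, coeff_zero_eq_constantCoeff_apply, pow_two, mul_assoc, ← hk]
  ring

theorem coeff_one_map_of_constantCoeff_eq_zero (e : R⟦X⟧ →ₐ[R] R⟦X⟧)
    (he : constantCoeff (e X) = 0) {f : R⟦X⟧} (hf : constantCoeff f = 0) :
    coeff 1 (e f) = coeff 1 f * coeff 1 (e X) := by
  obtain ⟨u, hu⟩ := X_dvd_iff.mpr he
  obtain ⟨k, hk⟩ := exists_eq_C_mul_X_add_X_sq_mul hf
  have hef : e f = C (coeff 1 f) * e X + X ^ 2 * (u ^ 2 * e k) := by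
    conv_lhs => rw [hk]
    rw [map_add, map_mul, map_mul, map_pow, C_eq_algebraMap, AlgHom.commutes, hu]
    ring
  rw [hef, map_add, coeff_C_mul, coeff_X_pow_mul', if_neg (by norm_num), add_zero]

noncomputable def fixedPointMultiplier {G : Type*} [Monoid G] (φ : G →* (R⟦X⟧ ≃ₐ[R] R⟦X⟧))
    (hfix : ∀ σ, constantCoeff (φ σ X) = 0) : G →* R where
  toFun σ := coeff 1 (φ σ X)
  map_one' := by simp
  map_mul' σ τ := by
    rw [map_mul, AlgEquiv.mul_apply, mul_comm]
    exact coeff_one_map_of_constantCoeff_eq_zero (φ σ).toAlgHom (hfix σ) (hfix τ)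

end PowerSeries

section Content

variable {R : Type*} [CommRing R] {π : R}

theorem gaussVal_eq_zero_of_not_dvd {g : R⟦X⟧} {j : ℕ} (hj : ¬π ∣ coeff j g) :
    gaussVal π g = 0 :=
  nonpos_iff_eq_zero.mp ((iInf_le _ j).trans_eq (emultiplicity_eq_zero.mpr hj))

variable [IsDomain R] [WfDvdMonoid R]

theorem exists_eq_C_pow_mul_gaussVal_eq_zero (hπ : ¬IsUnit π) {f : R⟦X⟧} (hf : f ≠ 0) :
    ∃ (n : ℕ) (g : R⟦X⟧), f = C (π ^ n) * g ∧ gaussVal π g = 0 := by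
  classical
  have hex : ∃ n, ∃ i, ¬π ^ (n + 1) ∣ coeff i f := by
    obtain ⟨i, hi⟩ := exists_coeff_ne_zero_iff_ne_zero.mpr hf
    obtain ⟨n, hn⟩ := FiniteMultiplicity.of_not_isUnit hπ hi
    exact ⟨n, i, hn⟩
  have hdvd : ∀ i, π ^ Nat.find hex ∣ coeff i f := by
    rcases hN : Nat.find hex with _ | m
    · simp
    · simpa using Nat.find_min hex (hN ▸ m.lt_succ_self)
  choose a ha using hdvd
  obtain ⟨j, hj⟩ := Nat.find_spec hex
  refine ⟨Nat.find hex, mk a, by ext i; rw [coeff_C_mul, coeff_mk, ha],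
    gaussVal_eq_zero_of_not_dvd (j := j) ?_⟩
  rintro ⟨b, hb⟩
  rw [coeff_mk] at hb
  exact hj ⟨b, by rw [ha, hb, pow_succ, mul_assoc]⟩

theorem exists_eq_C_mul_gaussVal_eq_zero_of_coeff_one_eq_zero (hπ : ¬IsUnit π) {f : R⟦X⟧}
    (hf : coeff 1 f = 0) :
    ∃ (c : R) (g : R⟦X⟧), f = C c * g ∧ gaussVal π g = 0 ∧ coeff 1 g = 0 := by
  rcases eq_or_ne f 0 with rfl | hf0
  · exact ⟨0, 1, by simp, gaussVal_eq_zero_of_not_dvd (j := 0) (by simpa [← isUnit_iff_dvd_one] using hπ), by simp⟩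
  obtain ⟨n, g, rfl, hg⟩ := exists_eq_C_pow_mul_gaussVal_eq_zero hπ hf0
  rw [coeff_C_mul] at hf
  exact ⟨_, g, rfl, hg, (mul_eq_zero.mp hf).resolve_left fun h => hf0 (by simp [h])⟩

end Content

theorem stmt8_general (R : Type*) [CommRing R] [IsDomain R] [IsDiscreteValuationRing R]
    (π : R) (hπ : Irreducible π)
    (G : Type*) [Group G] [Finite G]
    (φ : G →* (PowerSeries R ≃ₐ[R] PowerSeries R))
    (hfix : ∀ σ : G, PowerSeries.constantCoeff (φ σ PowerSeries.X) = 0)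
    (huniq : ∀ σ : G, σ ≠ 1 → ∀ (c : R) (g : PowerSeries R),
      φ σ PowerSeries.X - PowerSeries.X = PowerSeries.C c * g →
      gaussVal π g = 0 → (redMod π g).order = 1) :
    IsCyclic G := by
  refine isCyclic_of_injective_ringHom (fixedPointMultiplier φ hfix)
    ((injective_iff_map_eq_one _).mpr fun σ hσ => ?_)
  by_contra hσ1
  have hcoeff : coeff 1 (φ σ X - X) = 0 := by
    rw [map_sub, coeff_one_X]
    exact sub_eq_zero.mpr hσ
  obtain ⟨c, g, hfg, hg, hg1⟩ :=
    exists_eq_C_mul_gaussVal_eq_zero_of_coeff_one_eq_zero hπ.not_isUnit hcoeff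
  have hord : (redMod π g).order = (1 : ℕ) := huniq σ hσ1 c g hfg hg
  exact (order_eq_nat.mp hord).1 (by rw [redMod, coeff_map, hg1, map_zero])

/-- Let `G` be a finite group acting faithfully on the open `p`-adic disk with a unique
fixed point `y` (which, after a change of parameter, is `z = 0`): `z = 0` is fixed by all
of `G`, and for every `σ ≠ 1` the power series `σ(z) - z` has exactly one zero in the
open disk, counted with multiplicity (i.e. writing `σ(z) - z = c·g` with `g` primitive,
the reduction of `g` has `z`-order `1`).  Then `G` is cyclic. -/
theorem stmt8 (R : Type*) [CommRing R] [IsDomain R] [IsDiscreteValuationRing R]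
    [CharZero R] (π : R) (hπ : Irreducible π)
    [IsAdicComplete (Ideal.span {π}) R]
    (p : ℕ) (hp : p.Prime) (hchar : CharP (R ⧸ Ideal.span {π}) p)
    (halgcl : ∀ f : Polynomial (R ⧸ Ideal.span {π}), f.Monic → 0 < f.degree →
      ∃ x, Polynomial.eval x f = 0)
    (G : Type*) [Group G] [Finite G]
    (φ : G →* (PowerSeries R ≃ₐ[R] PowerSeries R)) (hφ : Function.Injective φ)
    (hfix : ∀ σ : G, PowerSeries.constantCoeff (φ σ PowerSeries.X) = 0)
    (huniq : ∀ σ : G, σ ≠ 1 → ∀ (c : R) (g : PowerSeries R),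
      φ σ PowerSeries.X - PowerSeries.X = PowerSeries.C c * g →
      gaussVal π g = 0 → (redMod π g).order = 1) :
    IsCyclic G :=
  stmt8_general R π hπ G φ hfix huniq
end

section
/- Let k be an algebraically closed field of characteristic 2, and let Ḡ ≅ ℤ/2 × ℤ/2 act on k[[t]] by sending μ ∈ Ḡ (via an embedding Ḡ ↪ (k,+)) to the automorphism t ↦ t/(1 + μt). Then this is a faithful action by k-algebra automorphisms, and for each of the three nontrivial characters χ of Ḡ, the Artin character satisfies a(χ) = 2, where a(ρ) = -ord_t(ρ(t) - t) for ρ ≠ 1 and a(1) = -Σ_{ρ≠1} a(ρ). -/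
/-!
The substitution `t ↦ t/(1 + ct)` is the Möbius transformation of the matrix `[[1, 0], [c, 1]]`,
so `c ↦ (f(t) ↦ f(t/(1 + ct)))` is a homomorphism from `(k, +)` to `Aut_k k⟦t⟧`; it is injective
since `t/(1 + ct) - t = -ct²/(1 + ct)`, which also shows that `ord_t(ρ(t) - t) = 2` for every
`ρ ≠ 1`. The Artin character is therefore `2 · (r_G - 1)` with `r_G` the regular character,
and `⟨χ, r_G - 1⟩ = 1` for every nontrivial `χ` because `∑_g χ(g) = 0`.
-/

open PowerSeries Finset

open Classical in
/-- The Artin character of a local action `φ` of a finite group on `k[[t]]`: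
`a(ρ) = -ord_t(ρ(t) - t)` for `ρ ≠ 1` and `a(1) = -Σ_{ρ ≠ 1} a(ρ)`. -/
noncomputable def artinChar {k : Type*} [CommRing k] {G : Type*} [Group G] [Fintype G]
    (φ : G →* (PowerSeries k ≃ₐ[k] PowerSeries k)) : G → ℂ :=
  fun ρ =>
    if ρ = 1 then
      ∑ ρ' ∈ Finset.univ.erase (1 : G),
        (((φ ρ' PowerSeries.X - PowerSeries.X).order.toNat : ℕ) : ℂ)
    else -(((φ ρ PowerSeries.X - PowerSeries.X).order.toNat : ℕ) : ℂ)

namespace PowerSeries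

variable {R : Type*} [CommRing R]

noncomputable def mobius (c : R) : R⟦X⟧ :=
  X * invOfUnit (1 + C c * X) 1

theorem isUnit_one_add_C_mul_X (c : R) : IsUnit (1 + C c * X : R⟦X⟧) :=
  isUnit_iff_constantCoeff.mpr (by simp)

theorem one_add_C_mul_X_mul_mobius (c : R) : (1 + C c * X) * mobius c = X := by
  rw [mobius, mul_left_comm, mul_invOfUnit _ _ (by simp), mul_one]

theorem eq_mobius_of_mul_eq_X {c : R} {f : R⟦X⟧} (h : (1 + C c * X) * f = X) :
    f = mobius c :=
  (isUnit_one_add_C_mul_X c).mul_left_cancel (h.trans (one_add_C_mul_X_mul_mobius c).symm)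

theorem mobius_zero : mobius (0 : R) = X :=
  (eq_mobius_of_mul_eq_X (by simp)).symm

theorem mobius_eq_X_iff {c : R} : mobius c = X ↔ c = 0 := by
  refine ⟨fun h => ?_, fun h => h ▸ mobius_zero⟩
  have h2 := congrArg (coeff 2) (one_add_C_mul_X_mul_mobius c)
  rw [h, add_mul, one_mul, mul_assoc, ← pow_two] at h2
  simpa using h2

theorem constantCoeff_mobius (c : R) : constantCoeff (mobius c) = 0 := by
  simp [mobius]

theorem HasSubst.mobius (c : R) : HasSubst (mobius c) :=
  HasSubst.of_constantCoeff_zero' (constantCoeff_mobius c)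

theorem subst_one_add_C_mul_X {a : R⟦X⟧} (ha : HasSubst a) (d : R) :
    subst a (1 + C d * X : R⟦X⟧) = 1 + C d * a := by
  rw [← coe_substAlgHom ha, map_add, map_one, map_mul, C_eq_algebraMap, AlgHom.commutes,
    coe_substAlgHom, subst_X ha]

theorem subst_mobius_mobius (c d : R) : subst (mobius c) (mobius d) = mobius (c + d) := by
  refine eq_mobius_of_mul_eq_X ?_
  have h := congrArg (subst (mobius c)) (one_add_C_mul_X_mul_mobius d)
  rw [subst_mul (HasSubst.mobius c), subst_one_add_C_mul_X (HasSubst.mobius c),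
    subst_X (HasSubst.mobius c)] at h
  calc (1 + C (c + d) * X) * subst (mobius c) (mobius d)
      = (1 + C c * X) * ((1 + C d * mobius c) * subst (mobius c) (mobius d)) := by
        rw [map_add]
        linear_combination (-(C d * subst (mobius c) (mobius d))) * one_add_C_mul_X_mul_mobius c
    _ = X := by rw [h, one_add_C_mul_X_mul_mobius]

theorem order_mobius_sub_X [IsDomain R] {c : R} (hc : c ≠ 0) : (mobius c - X).order = 2 := by
  have h : (1 + C c * X) * (mobius c - X) = monomial 2 (-c) := by
    rw [monomial_eq_C_mul_X_pow, map_neg]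
    linear_combination one_add_C_mul_X_mul_mobius c
  have h2 := congrArg order h
  rwa [order_mul, order_zero_of_unit (isUnit_one_add_C_mul_X c), zero_add,
    order_monomial_of_ne_zero _ _ (neg_ne_zero.mpr hc)] at h2

theorem subst_mobius_subst_mobius (c d : R) (f : R⟦X⟧) :
    subst (mobius c) (subst (mobius d) f) = subst (mobius (c + d)) f := by
  rw [subst_comp_subst_apply (HasSubst.mobius d) (HasSubst.mobius c), subst_mobius_mobius]

noncomputable def mobiusEquiv (c : R) : R⟦X⟧ ≃ₐ[R] R⟦X⟧ :=
  AlgEquiv.ofAlgHom (substAlgHom (HasSubst.mobius c)) (substAlgHom (HasSubst.mobius (-c)))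
    (AlgHom.ext fun f => by
      simp only [AlgHom.comp_apply, coe_substAlgHom, subst_mobius_subst_mobius, add_neg_cancel,
        mobius_zero, X_subst, AlgHom.id_apply])
    (AlgHom.ext fun f => by
      simp only [AlgHom.comp_apply, coe_substAlgHom, subst_mobius_subst_mobius, neg_add_cancel,
        mobius_zero, X_subst, AlgHom.id_apply])

theorem mobiusEquiv_apply (c : R) (f : R⟦X⟧) : mobiusEquiv c f = subst (mobius c) f :=
  congrFun (coe_substAlgHom (HasSubst.mobius c)) f

theorem mobiusEquiv_X (c : R) : mobiusEquiv c X = mobius c :=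
  (mobiusEquiv_apply c X).trans (subst_X (HasSubst.mobius c))

variable (R) in
noncomputable def mobiusHom : Multiplicative R →* (R⟦X⟧ ≃ₐ[R] R⟦X⟧) where
  toFun c := mobiusEquiv c.toAdd
  map_one' := AlgEquiv.ext fun f => by
    rw [toAdd_one, mobiusEquiv_apply, mobius_zero, X_subst, AlgEquiv.one_apply]
  map_mul' c d := AlgEquiv.ext fun f => by
    rw [toAdd_mul, AlgEquiv.mul_apply, mobiusEquiv_apply, mobiusEquiv_apply, mobiusEquiv_apply,
      subst_mobius_subst_mobius]

theorem mobiusHom_apply_X (c : Multiplicative R) : mobiusHom R c X = mobius c.toAdd :=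
  mobiusEquiv_X _

theorem mobiusHom_injective : Function.Injective (mobiusHom R) := by
  refine (injective_iff_map_eq_one _).mpr fun c hc => ?_
  have h := mobiusHom_apply_X c
  rw [hc, AlgEquiv.one_apply, eq_comm, mobius_eq_X_iff] at h
  exact toAdd_eq_zero.mp h

theorem order_mobiusHom_apply_X_sub_X [IsDomain R] {c : Multiplicative R} (hc : c ≠ 1) :
    (mobiusHom R c X - X).order = 2 := by
  rw [mobiusHom_apply_X]
  exact order_mobius_sub_X (toAdd_eq_zero.not.mpr hc)

end PowerSeries

section ArtinCharacter

variable {G : Type*} [Group G] [Fintype G]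

open Classical in
theorem innerCF_mul_regular_sub_one {χ : G →* ℂ} (hχ : χ ≠ 1) (n : ℂ) :
    innerCF χ (fun g => n * ((if g = 1 then (Fintype.card G : ℂ) else 0) - 1)) = n := by
  have hsum : ∑ g : G, starRingEnd ℂ (χ g) = 0 := by
    rw [← map_sum, sum_hom_units_eq_zero χ hχ, map_zero]
  have hcard : (Fintype.card G : ℂ) ≠ 0 := Nat.cast_ne_zero.mpr Fintype.card_ne_zero
  simp only [innerCF, mul_sub, mul_one, Finset.sum_sub_distrib, mul_ite, mul_zero,
    Finset.sum_ite_eq', Finset.mem_univ, if_true, map_one, one_mul, ← Finset.sum_mul, hsum,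
    zero_mul, sub_zero]
  field_simp

open Classical in
theorem artinChar_eq_of_order_eq {k : Type*} [CommRing k]
    {φ : G →* (k⟦X⟧ ≃ₐ[k] k⟦X⟧)} {n : ℕ} (h : ∀ ρ : G, ρ ≠ 1 → (φ ρ X - X).order = (n : ℕ∞)) :
    artinChar φ = fun ρ => (n : ℂ) * ((if ρ = 1 then (Fintype.card G : ℂ) else 0) - 1) := by
  have hn : ∀ ρ, ρ ≠ 1 → (((φ ρ X - X).order.toNat : ℕ) : ℂ) = n := fun ρ hρ => by
    rw [h ρ hρ, ENat.toNat_natCast]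
  funext ρ
  by_cases hρ : ρ = 1
  · rw [artinChar, if_pos hρ, if_pos hρ,
      Finset.sum_eq_card_nsmul fun ρ' hρ' => hn ρ' (Finset.ne_of_mem_erase hρ'),
      Finset.card_erase_of_mem (Finset.mem_univ _), Finset.card_univ,
      nsmul_eq_mul, Nat.cast_pred Fintype.card_pos]
    ring
  · rw [artinChar, if_neg hρ, if_neg hρ, hn ρ hρ]
    ring

end ArtinCharacter

theorem stmt16_general (k : Type*) [Field k]
    (ι : (ZMod 2 × ZMod 2) →+ k) (hι : Function.Injective ι) :
    ∃ φ : Multiplicative (ZMod 2 × ZMod 2) →* (PowerSeries k ≃ₐ[k] PowerSeries k),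
      Function.Injective φ ∧
      (∀ μ : Multiplicative (ZMod 2 × ZMod 2),
        φ μ PowerSeries.X =
          PowerSeries.X *
            PowerSeries.invOfUnit (1 + PowerSeries.C (ι (Multiplicative.toAdd μ)) *
              PowerSeries.X) 1) ∧
      ∀ χ : Multiplicative (ZMod 2 × ZMod 2) →* ℂ, χ ≠ 1 →
        innerCF (⇑χ) (artinChar φ) = 2 := by
  have hι' : Function.Injective (AddMonoidHom.toMultiplicative ι) := hι
  set φ := (mobiusHom k).comp (AddMonoidHom.toMultiplicative ι)
  have horder : ∀ ρ, ρ ≠ 1 → (φ ρ X - X).order = ((2 : ℕ) : ℕ∞) := fun ρ hρ =>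
    (order_mobiusHom_apply_X_sub_X ((map_ne_one_iff _ hι').mpr hρ)).trans Nat.cast_ofNat.symm
  refine ⟨φ, mobiusHom_injective.comp hι', fun μ => mobiusHom_apply_X _, fun χ hχ => ?_⟩
  rw [artinChar_eq_of_order_eq horder, innerCF_mul_regular_sub_one hχ]
  norm_num

/-- Let `k` be an algebraically closed field of characteristic `2` and let
`Ḡ ≅ ℤ/2 × ℤ/2` act on `k[[t]]` by sending `μ ∈ Ḡ` (via an embedding `Ḡ ↪ (k,+)`) to
`t ↦ t/(1 + μt)`.  Then this is a faithful action by `k`-algebra automorphisms and for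
each of the three nontrivial characters `χ` of `Ḡ`, the Artin character satisfies
`⟨χ, a⟩ = 2`. -/
theorem stmt16 (k : Type*) [Field k] [IsAlgClosed k] [CharP k 2]
    (ι : (ZMod 2 × ZMod 2) →+ k) (hι : Function.Injective ι) :
    ∃ φ : Multiplicative (ZMod 2 × ZMod 2) →* (PowerSeries k ≃ₐ[k] PowerSeries k),
      Function.Injective φ ∧
      (∀ μ : Multiplicative (ZMod 2 × ZMod 2),
        φ μ PowerSeries.X =
          PowerSeries.X *
            PowerSeries.invOfUnit (1 + PowerSeries.C (ι (Multiplicative.toAdd μ)) *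
              PowerSeries.X) 1) ∧
      ∀ χ : Multiplicative (ZMod 2 × ZMod 2) →* ℂ, χ ≠ 1 →
        innerCF (⇑χ) (artinChar φ) = 2 :=
  stmt16_general k ι hι
end
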